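/- arXiv:2106.14122 — 2 statements merged into one kernel-verified Lean document; each statement's English description precedes it below -/
import Mathlib

section
/- Let A be a symmetric positive definite d×d real matrix with eigenvalues 0 < λ₁(A) ≤ ... ≤ λ_d(A), and let α ∈ ℝ^d. For a subset T ⊆ [d] of size p, define f(T) = α_T^⊤ (A_{T,T})^{-1} α_T and g(T) = α_T^⊤ (diag(A_{T,T}))^{-1} α_T, where A_{T,T} is the principal submatrix indexed by T. Let T* maximize f over subsets of size p, and let T̂ maximize g over subsets of size p (equivalently, T̂ consists of the indices of the p largest entries of diag(A)^{-1} α^{⊙2}). Then 0 ≤ f(T*) − f(T̂) ≤ 2(λ₁(A)^{-1} − λ_d(A)^{-1}) ‖α‖². -/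
/-!
Write `λ₁ = λ_min(A)` and `λ_d = λ_max(A)`. In the Loewner order `λ₁ • 1 ≤ A ≤ λ_d • 1`, and these
bounds pass to every principal submatrix `A_{T,T}` and to its diagonal part `diag(A_{T,T})`.
Inversion maps a spectrum in `[λ₁, λ_d]` into `[λ_d⁻¹, λ₁⁻¹]`, so both `f(T)` and `g(T)` lie in
`[λ_d⁻¹ ‖α_T‖², λ₁⁻¹ ‖α_T‖²]`. Since `g(T*) ≤ g(T̂)`,
`f(T*) - f(T̂) ≤ (f(T*) - g(T*)) + (g(T̂) - f(T̂)) ≤ (λ₁⁻¹ - λ_d⁻¹)(‖α_{T*}‖² + ‖α_{T̂}‖²)`.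
-/

open Matrix Finset
open scoped MatrixOrder

namespace Matrix

variable {n m : Type*} [Fintype n]

lemma dotProduct_mulVec_le_of_le {A B : Matrix n n ℝ} (h : A ≤ B) (x : n → ℝ) :
    x ⬝ᵥ A *ᵥ x ≤ x ⬝ᵥ B *ᵥ x := by
  simpa [sub_mulVec, dotProduct_sub] using (le_iff.mp h).dotProduct_mulVec_nonneg x

lemma dotProduct_subtype_self_le_sum_sq (v : n → ℝ) (T : Finset n) :
    (fun i : T => v i) ⬝ᵥ (fun i : T => v i) ≤ ∑ i, v i ^ 2 :=
  calc (fun i : T => v i) ⬝ᵥ (fun i : T => v i) = ∑ i ∈ T, v i ^ 2 := by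
        simp only [dotProduct, ← sq]
        exact sum_coe_sort T fun i => v i ^ 2
    _ ≤ ∑ i, v i ^ 2 := sum_le_univ_sum_of_nonneg fun i => sq_nonneg (v i)

variable [DecidableEq n] [Fintype m] [DecidableEq m]

lemma dotProduct_algebraMap_mulVec (r : ℝ) (x : n → ℝ) :
    x ⬝ᵥ algebraMap ℝ (Matrix n n ℝ) r *ᵥ x = r * (x ⬝ᵥ x) := by
  rw [Algebra.algebraMap_eq_smul_one, smul_mulVec, one_mulVec, dotProduct_smul, smul_eq_mul]

lemma submatrix_algebraMap {e : m → n} (he : Function.Injective e) (r : ℝ) :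
    (algebraMap ℝ (Matrix n n ℝ) r).submatrix e e = algebraMap ℝ _ r := by
  simp [algebraMap_eq_diagonal, submatrix_diagonal _ _ he]

lemma algebraMap_le_submatrix {A : Matrix n n ℝ} {r : ℝ} (h : algebraMap ℝ _ r ≤ A)
    {e : m → n} (he : Function.Injective e) : algebraMap ℝ _ r ≤ A.submatrix e e :=
  submatrix_algebraMap he r ▸ (le_iff.mp h).submatrix e

lemma submatrix_le_algebraMap {A : Matrix n n ℝ} {r : ℝ} (h : A ≤ algebraMap ℝ _ r)
    {e : m → n} (he : Function.Injective e) : A.submatrix e e ≤ algebraMap ℝ _ r :=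
  submatrix_algebraMap he r ▸ (le_iff.mp h).submatrix e

lemma algebraMap_le_diagonal_diag {A : Matrix n n ℝ} {r : ℝ} (h : algebraMap ℝ _ r ≤ A) :
    algebraMap ℝ _ r ≤ diagonal A.diag := by
  rw [le_iff, algebraMap_eq_diagonal, Pi.algebraMap_def, diagonal_sub, posSemidef_diagonal_iff]
  intro i
  simpa [algebraMap_eq_diagonal] using (le_iff.mp h).diag_nonneg (i := i)

lemma diagonal_diag_le_algebraMap {A : Matrix n n ℝ} {r : ℝ} (h : A ≤ algebraMap ℝ _ r) :
    diagonal A.diag ≤ algebraMap ℝ _ r := by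
  rw [le_iff, algebraMap_eq_diagonal, Pi.algebraMap_def, diagonal_sub, posSemidef_diagonal_iff]
  intro i
  simpa [algebraMap_eq_diagonal] using (le_iff.mp h).diag_nonneg (i := i)

lemma IsHermitian.spectrum_subset_Icc_iff {A : Matrix n n ℝ} (hA : A.IsHermitian) {a b : ℝ} :
    spectrum ℝ A ⊆ Set.Icc a b ↔ algebraMap ℝ _ a ≤ A ∧ A ≤ algebraMap ℝ _ b := by
  rw [algebraMap_le_iff_le_spectrum hA.isSelfAdjoint,
    le_algebraMap_iff_spectrum_le hA.isSelfAdjoint]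
  exact ⟨fun h => ⟨fun x hx => (h hx).1, fun x hx => (h hx).2⟩,
    fun h x hx => ⟨h.1 x hx, h.2 x hx⟩⟩

lemma spectrum_inv_subset_Icc {A : Matrix n n ℝ} {a b : ℝ} (ha : 0 < a)
    (h : spectrum ℝ A ⊆ Set.Icc a b) : spectrum ℝ A⁻¹ ⊆ Set.Icc b⁻¹ a⁻¹ := by
  have hA : IsUnit A := (spectrum.zero_notMem_iff ℝ).1 fun h0 => (h h0).1.not_gt ha
  lift A to (Matrix n n ℝ)ˣ using hA
  intro x hx
  rw [← coe_units_inv, ← spectrum.inv₀_mem_iff] at hx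
  obtain ⟨hax, hxb⟩ := h hx
  have hx : 0 < x := inv_pos.1 (ha.trans_le hax)
  exact ⟨(inv_le_comm₀ hx (ha.trans_le (hax.trans hxb))).1 hxb, (le_inv_comm₀ ha hx).1 hax⟩

lemma dotProduct_inv_mulVec_mem_Icc {A : Matrix n n ℝ} (hA : A.IsHermitian) {a b : ℝ}
    (ha : 0 < a) (hlo : algebraMap ℝ _ a ≤ A) (hhi : A ≤ algebraMap ℝ _ b) (x : n → ℝ) :
    x ⬝ᵥ A⁻¹ *ᵥ x ∈ Set.Icc (b⁻¹ * (x ⬝ᵥ x)) (a⁻¹ * (x ⬝ᵥ x)) := by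
  obtain ⟨hlo', hhi'⟩ := hA.inv.spectrum_subset_Icc_iff.1 <|
    spectrum_inv_subset_Icc ha (hA.spectrum_subset_Icc_iff.2 ⟨hlo, hhi⟩)
  rw [← dotProduct_algebraMap_mulVec, ← dotProduct_algebraMap_mulVec]
  exact ⟨dotProduct_mulVec_le_of_le hlo' x, dotProduct_mulVec_le_of_le hhi' x⟩

end Matrix

theorem scan_diag_approximation_general {d p : ℕ} (hd : 0 < d)
    (A : Matrix (Fin d) (Fin d) ℝ) (hA : A.PosDef) (α : Fin d → ℝ)
    (f g : Finset (Fin d) → ℝ)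
    (hf : ∀ T : Finset (Fin d),
      f T = dotProduct (fun i : T => α i)
        ((A.submatrix (fun i : T => (i : Fin d)) (fun j : T => (j : Fin d)))⁻¹ *ᵥ
          (fun i : T => α i)))
    (hg : ∀ T : Finset (Fin d),
      g T = dotProduct (fun i : T => α i)
        ((Matrix.diagonal (fun i : T => A i i))⁻¹ *ᵥ (fun i : T => α i)))
    (Tstar That : Finset (Fin d))
    (hTstar : Tstar.card = p ∧ ∀ T : Finset (Fin d), T.card = p → f T ≤ f Tstar)
    (hThat : That.card = p ∧ ∀ T : Finset (Fin d), T.card = p → g T ≤ g That)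
    (lam1 lamd : ℝ)
    (hlam1 : lam1 = Finset.univ.inf'
      (⟨⟨0, hd⟩, Finset.mem_univ _⟩ : (Finset.univ : Finset (Fin d)).Nonempty)
      hA.1.eigenvalues)
    (hlamd : lamd = Finset.univ.sup'
      (⟨⟨0, hd⟩, Finset.mem_univ _⟩ : (Finset.univ : Finset (Fin d)).Nonempty)
      hA.1.eigenvalues) :
    0 ≤ f Tstar - f That ∧
      f Tstar - f That ≤ 2 * (lam1⁻¹ - lamd⁻¹) * ∑ i, α i ^ 2 := by
  have heig (i : Fin d) : hA.1.eigenvalues i ∈ Set.Icc lam1 lamd :=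
    ⟨hlam1 ▸ inf'_le _ (mem_univ i), hlamd ▸ le_sup' _ (mem_univ i)⟩
  have hlam1_pos : 0 < lam1 := hlam1 ▸ (lt_inf'_iff _).2 fun i _ => hA.eigenvalues_pos i
  have hgap : 0 ≤ lam1⁻¹ - lamd⁻¹ :=
    sub_nonneg.2 (inv_anti₀ hlam1_pos ((heig ⟨0, hd⟩).1.trans (heig ⟨0, hd⟩).2))
  obtain ⟨hlo, hhi⟩ := hA.1.spectrum_subset_Icc_iff.1 <|
    hA.1.spectrum_real_eq_range_eigenvalues ▸ Set.range_subset_iff.2 heig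
  set s : Finset (Fin d) → ℝ := fun T => (fun i : T => α i) ⬝ᵥ (fun i : T => α i)
  have hband (T : Finset (Fin d)) : f T ∈ Set.Icc (lamd⁻¹ * s T) (lam1⁻¹ * s T) ∧
      g T ∈ Set.Icc (lamd⁻¹ * s T) (lam1⁻¹ * s T) := by
    have hloT := algebraMap_le_submatrix hlo (Subtype.val_injective (p := (· ∈ T)))
    have hhiT := submatrix_le_algebraMap hhi (Subtype.val_injective (p := (· ∈ T)))
    rw [hf, hg]
    exact ⟨dotProduct_inv_mulVec_mem_Icc (hA.1.submatrix _) hlam1_pos hloT hhiT _,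
      dotProduct_inv_mulVec_mem_Icc (isHermitian_diagonal _) hlam1_pos
        (algebraMap_le_diagonal_diag hloT) (diagonal_diag_le_algebraMap hhiT) _⟩
  have hs (T : Finset (Fin d)) : (lam1⁻¹ - lamd⁻¹) * s T ≤ (lam1⁻¹ - lamd⁻¹) * ∑ i, α i ^ 2 :=
    mul_le_mul_of_nonneg_left (dotProduct_subtype_self_le_sum_sq α T) hgap
  have hg_le : g Tstar ≤ g That := hThat.2 _ hTstar.1
  refine ⟨sub_nonneg.2 (hTstar.2 _ hThat.1), ?_⟩
  obtain ⟨⟨-, hf_star⟩, ⟨hg_star, -⟩⟩ := hband Tstar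
  obtain ⟨⟨hf_hat, -⟩, ⟨-, hg_hat⟩⟩ := hband That
  linarith [hs Tstar, hs That]

/-- Approximation quality of the diagonal surrogate for the scan statistic:
if `T*` maximizes `f(T) = α_T^⊤ (A_{T,T})⁻¹ α_T` and `T̂` maximizes
`g(T) = α_T^⊤ diag(A_{T,T})⁻¹ α_T` over size-`p` subsets, then
`0 ≤ f(T*) − f(T̂) ≤ 2(λ₁(A)⁻¹ − λ_d(A)⁻¹)‖α‖²`. -/
theorem scan_diag_approximation {d p : ℕ} (hd : 0 < d) (hp : 0 < p) (hpd : p ≤ d)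
    (A : Matrix (Fin d) (Fin d) ℝ) (hA : A.PosDef) (α : Fin d → ℝ)
    (f g : Finset (Fin d) → ℝ)
    (hf : ∀ T : Finset (Fin d),
      f T = dotProduct (fun i : T => α i)
        ((A.submatrix (fun i : T => (i : Fin d)) (fun j : T => (j : Fin d)))⁻¹ *ᵥ
          (fun i : T => α i)))
    (hg : ∀ T : Finset (Fin d),
      g T = dotProduct (fun i : T => α i)
        ((Matrix.diagonal (fun i : T => A i i))⁻¹ *ᵥ (fun i : T => α i)))
    (Tstar That : Finset (Fin d))
    (hTstar : Tstar.card = p ∧ ∀ T : Finset (Fin d), T.card = p → f T ≤ f Tstar)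
    (hThat : That.card = p ∧ ∀ T : Finset (Fin d), T.card = p → g T ≤ g That)
    (lam1 lamd : ℝ)
    (hlam1 : lam1 = Finset.univ.inf'
      (⟨⟨0, hd⟩, Finset.mem_univ _⟩ : (Finset.univ : Finset (Fin d)).Nonempty)
      hA.1.eigenvalues)
    (hlamd : lamd = Finset.univ.sup'
      (⟨⟨0, hd⟩, Finset.mem_univ _⟩ : (Finset.univ : Finset (Fin d)).Nonempty)
      hA.1.eigenvalues) :
    0 ≤ f Tstar - f That ∧
      f Tstar - f That ≤ 2 * (lam1⁻¹ - lamd⁻¹) * ∑ i, α i ^ 2 :=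
  scan_diag_approximation_general hd A hA α f g hf hg Tstar That hTstar hThat lam1 lamd hlam1 hlamd
end

section
/- If X is a chi-square random variable with d degrees of freedom, then for all x > 0, P(X ≥ d + 2√(dx) + 2x) ≤ e^{−x}. -/
open MeasureTheory ProbabilityTheory Real

/-!
Chernoff's method. For a standard Gaussian `g` and `t < 1/2`, `E[exp(t g²)] = (1 - 2t)^(-1/2)`,
so by independence `P(X ≥ a) ≤ exp(-ta) (1 - 2t)^(-d/2)`; the choice `1 - 2t = d/a` gives
`P(X ≥ a) ≤ exp(-(a - d)/2) (a/d)^(d/2)`. For `a = d + 2√(dx) + 2x` and `v = 2√(dx)/d` one has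
`a/d = 1 + v + v²/2 ≤ exp v`, so `(a/d)^(d/2) ≤ exp √(dx)` and the bound is `exp(-x)`.
-/

lemma gaussianPDFReal_mul_exp_mul_sq (t y : ℝ) :
    gaussianPDFReal 0 1 y * exp (t * y ^ 2) = (√(2 * π))⁻¹ * exp (-(1 / 2 - t) * y ^ 2) := by
  rw [gaussianPDFReal, mul_assoc, ← exp_add]
  congr 2
  · simp
  · simp only [NNReal.coe_one]; ring

lemma mgf_sq_gaussianReal {t : ℝ} (ht : t < 1 / 2) :
    mgf (fun y => y ^ 2) (gaussianReal 0 1) t = √((1 - 2 * t)⁻¹) := by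
  rw [mgf, integral_gaussianReal_eq_integral_smul one_ne_zero]
  simp_rw [smul_eq_mul, gaussianPDFReal_mul_exp_mul_sq, integral_const_mul, integral_gaussian]
  rw [← sqrt_inv, ← sqrt_mul (by positivity)]
  congr 1
  have : 1 - 2 * t ≠ 0 := by linarith
  field_simp

section IndependentGaussians

variable {Ω ι : Type*} [MeasurableSpace Ω] {μ : Measure Ω}

lemma mgf_sq_of_map_eq_gaussianReal {X : Ω → ℝ} (hX : μ.map X = gaussianReal 0 1) {t : ℝ}
    (ht : t < 1 / 2) : mgf (fun ω => X ω ^ 2) μ t = √((1 - 2 * t)⁻¹) := by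
  have hXm : AEMeasurable X μ := .of_map_ne_zero (by simp [hX, NeZero.ne])
  rw [← mgf_sq_gaussianReal ht, ← hX, mgf_map hXm (by fun_prop)]
  rfl

variable [Fintype ι] {G : ι → Ω → ℝ}

lemma mgf_sum_sq_of_iIndepFun (hindep : iIndepFun G μ)
    (hgauss : ∀ i, μ.map (G i) = gaussianReal 0 1) {t : ℝ} (ht : t < 1 / 2) :
    mgf (fun ω => ∑ i, G i ω ^ 2) μ t = √((1 - 2 * t)⁻¹) ^ Fintype.card ι := by
  have hGm : ∀ i, AEMeasurable (G i) μ := fun i => .of_map_ne_zero (by simp [hgauss i, NeZero.ne])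
  have hsq : iIndepFun (fun i ω => G i ω ^ 2) μ :=
    hindep.comp₀ (fun _ y => y ^ 2) hGm (fun _ => by fun_prop)
  rw [← Finset.sum_fn, hsq.mgf_sum₀ (fun i => (hGm i).pow_const 2)]
  simp [mgf_sq_of_map_eq_gaussianReal (hgauss _) ht]

lemma measureReal_sum_sq_ge_le (hindep : iIndepFun G μ)
    (hgauss : ∀ i, μ.map (G i) = gaussianReal 0 1) (hι : 0 < Fintype.card ι) {a : ℝ}
    (ha : Fintype.card ι ≤ a) :
    μ.real {ω | a ≤ ∑ i, G i ω ^ 2}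
      ≤ exp (-(a - Fintype.card ι) / 2) * √(a / Fintype.card ι) ^ Fintype.card ι := by
  have := hindep.isProbabilityMeasure
  set d : ℝ := (Fintype.card ι : ℝ)
  have hd : 0 < d := Nat.cast_pos.2 hι
  have ha0 : 0 < a := hd.trans_le ha
  set t := (1 - d / a) / 2
  have ht : t < 1 / 2 := by unfold t; linarith [div_pos hd ha0]
  have ht0 : 0 ≤ t := by unfold t; linarith [(div_le_one ha0).2 ha]
  have h1t : 1 - 2 * t = d / a := by unfold t; ring
  have hmgf := mgf_sum_sq_of_iIndepFun hindep hgauss ht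
  rw [h1t, inv_div] at hmgf
  have hint : Integrable (fun ω => exp (t * ∑ i, G i ω ^ 2)) μ := by
    rw [← mgf_pos_iff, hmgf]; positivity
  calc μ.real {ω | a ≤ ∑ i, G i ω ^ 2}
      ≤ exp (-t * a) * mgf (fun ω => ∑ i, G i ω ^ 2) μ t := measure_ge_le_exp_mul_mgf a ht0 hint
    _ = exp (-(a - d) / 2) * √(a / d) ^ Fintype.card ι := by
      rw [hmgf]
      congr 2
      unfold t; field_simp

end IndependentGaussians

lemma add_two_mul_sqrt_add_two_mul_le_mul_exp {d x : ℝ} (hd : 0 < d) (hx : 0 ≤ x) :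
    d + 2 * √(d * x) + 2 * x ≤ d * exp (2 * √(d * x) / d) := by
  have hs : √(d * x) ^ 2 = d * x := sq_sqrt (by positivity)
  calc d + 2 * √(d * x) + 2 * x
      = d * (1 + 2 * √(d * x) / d + (2 * √(d * x) / d) ^ 2 / 2) := by
        field_simp; rw [hs]; ring
    _ ≤ d * exp (2 * √(d * x) / d) := by
        gcongr; exact quadratic_le_exp_of_nonneg (by positivity)

lemma exp_mul_sqrt_pow_le_exp_neg {n : ℕ} (hn : 0 < n) {x : ℝ} (hx : 0 ≤ x) :
    exp (-(n + 2 * √(n * x) + 2 * x - n) / 2) * √((n + 2 * √(n * x) + 2 * x) / n) ^ n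
      ≤ exp (-x) := by
  have hd : (0 : ℝ) < n := Nat.cast_pos.2 hn
  set s := √(n * x)
  have hroot : √((n + 2 * s + 2 * x) / n) ≤ exp (s / n) := by
    rw [sqrt_le_left (exp_pos _).le, ← exp_nat_mul, div_le_iff₀ hd]
    calc (n : ℝ) + 2 * s + 2 * x ≤ n * exp (2 * s / n) :=
          add_two_mul_sqrt_add_two_mul_le_mul_exp hd hx
      _ = exp ((2 : ℕ) * (s / n)) * n := by push_cast; ring_nf
  calc exp (-(n + 2 * s + 2 * x - n) / 2) * √((n + 2 * s + 2 * x) / n) ^ n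
      ≤ exp (-(n + 2 * s + 2 * x - n) / 2) * exp (s / n) ^ n := by gcongr
    _ = exp (-x) := by
        rw [← exp_nat_mul, ← exp_add]
        congr 1
        field_simp
        ring

theorem chi_square_tail_bound_general {Ω : Type*} [MeasurableSpace Ω]
    (μ : Measure Ω)
    {d : ℕ} (hd : 1 ≤ d) (G : Fin d → Ω → ℝ)
    (hindep : iIndepFun G μ)
    (hgauss : ∀ i, μ.map (G i) = gaussianReal 0 1)
    (x : ℝ) (hx : 0 < x) :
    μ {ω | (d : ℝ) + 2 * Real.sqrt (d * x) + 2 * x ≤ ∑ i, (G i ω) ^ 2}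
      ≤ ENNReal.ofReal (Real.exp (-x)) := by
  have := hindep.isProbabilityMeasure
  have hchernoff := measureReal_sum_sq_ge_le hindep hgauss (a := d + 2 * √(d * x) + 2 * x)
    (by rwa [Fintype.card_fin]) (by rw [Fintype.card_fin]; linarith [sqrt_nonneg (d * x)])
  rw [Fintype.card_fin] at hchernoff
  rw [← ofReal_measureReal]
  exact ENNReal.ofReal_le_ofReal (hchernoff.trans (exp_mul_sqrt_pow_le_exp_neg hd hx.le))

/-- Birgé's concentration inequality for the chi-square distribution: if `X` is the sum of
squares of `d` independent standard Gaussian random variables, then for all `x > 0`,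
`P(X ≥ d + 2√(dx) + 2x) ≤ exp(−x)`. -/
theorem chi_square_tail_bound {Ω : Type*} [MeasurableSpace Ω]
    (μ : Measure Ω) [IsProbabilityMeasure μ]
    {d : ℕ} (hd : 1 ≤ d) (G : Fin d → Ω → ℝ)
    (hmeas : ∀ i, Measurable (G i))
    (hindep : iIndepFun G μ)
    (hgauss : ∀ i, μ.map (G i) = gaussianReal 0 1)
    (x : ℝ) (hx : 0 < x) :
    μ {ω | (d : ℝ) + 2 * Real.sqrt (d * x) + 2 * x ≤ ∑ i, (G i ω) ^ 2}
      ≤ ENNReal.ofReal (Real.exp (-x)) :=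
  chi_square_tail_bound_general μ hd G hindep hgauss x hx
end
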